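/- Let W_s(x,y) = α_s x + β_s y for s = 0,…,l with real coefficients, let κ_s > 0, and set c = Σ_s κ_s e^{W_s}. Define I(φ) = max_s (α_s cos φ + β_s sin φ). If I(φ) ≥ 0 for all φ ∈ [0, 2π), then the function c^{-1/2} is bounded on ℝ². If moreover I(φ) > 0 for all φ, then c^{-1/2}(x,y) → 0 as x² + y² → ∞. -/

import Mathlib

/-!
Every summand bounds `c` from below, so `c ≥ (min κ) · exp (max_s W_s)`, and in polar coordinates
`max_s W_s (r cos φ, r sin φ) = r · I(φ)`. Hence `c ≥ min κ > 0` when `I ≥ 0`. When `I > 0`, the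
lower semicontinuous function `I` attains a positive minimum `ε` on `[-π, π]`, so `c` grows at
least like `exp (ε r)`.
-/

noncomputable section
open Filter Real

section

variable {ι : Type*}

lemma iInf_pos_of_forall_pos [Finite ι] [Nonempty ι] {κ : ι → ℝ} (hκ : ∀ s, 0 < κ s) :
    0 < ⨅ s, κ s := by
  obtain ⟨s, hs⟩ := exists_eq_ciInf_of_finite (f := κ)
  exact hs ▸ hκ s

lemma iInf_mul_exp_iSup_le_sum_mul_exp [Fintype ι] [Nonempty ι] {κ : ι → ℝ} (hκ : ∀ s, 0 ≤ κ s)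
    (f : ι → ℝ) :
    (⨅ s, κ s) * exp (⨆ s, f s) ≤ ∑ s, κ s * exp (f s) := by
  obtain ⟨s, hs⟩ := exists_eq_ciSup_of_finite (f := f)
  calc (⨅ s, κ s) * exp (⨆ s, f s) ≤ κ s * exp (f s) := by
        rw [← hs]; gcongr; exact ciInf_le (Finite.bddBelow_range κ) s
    _ ≤ ∑ s, κ s * exp (f s) :=
        Finset.single_le_sum (fun i _ => mul_nonneg (hκ i) (exp_pos _).le) (Finset.mem_univ s)

lemma iSup_linear_eq_iSup_arg_mul_norm (α β : ι → ℝ) (z : ℂ) :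
    ⨆ s, α s * z.re + β s * z.im = (⨆ s, α s * cos z.arg + β s * sin z.arg) * ‖z‖ := by
  rw [iSup_mul_of_nonneg (norm_nonneg z)]
  congr 1 with s
  rw [← Complex.norm_mul_cos_arg z, ← Complex.norm_mul_sin_arg z]
  ring

lemma lowerSemicontinuous_iSup_linear_cos_sin [Finite ι] (α β : ι → ℝ) :
    LowerSemicontinuous fun φ => ⨆ s, α s * cos φ + β s * sin φ :=
  lowerSemicontinuous_ciSup (fun _ => Finite.bddAbove_range _)
    fun _ => Continuous.lowerSemicontinuous (by fun_prop)

end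

lemma exists_pos_le_comp_arg {I : ℝ → ℝ} (hI : LowerSemicontinuous I) (hpos : ∀ φ, 0 < I φ) :
    ∃ ε > 0, ∀ z : ℂ, ε ≤ I z.arg := by
  obtain ⟨φ₀, -, hφ₀⟩ := (hI.lowerSemicontinuousOn _).exists_isMinOn
    (Set.nonempty_Icc.2 (neg_le_self pi_pos.le)) isCompact_Icc
  exact ⟨I φ₀, hpos φ₀, fun z => hφ₀ ⟨(Complex.neg_pi_lt_arg z).le, Complex.arg_le_pi z⟩⟩

lemma tendsto_norm_equivRealProd_symm_cocompact_atTop :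
    Tendsto (fun p : ℝ × ℝ => ‖Complex.equivRealProd.symm p‖) (cocompact (ℝ × ℝ)) atTop :=
  tendsto_norm_cocompact_atTop.comp
    Complex.equivRealProdCLM.symm.toHomeomorph.isClosedEmbedding.tendsto_cocompact

/-- Lump-type fields: for `c = Σ_s κ_s e^{α_s x + β_s y}` with `κ_s > 0`, if the tropical
maximum `I(φ) = max_s (α_s cos φ + β_s sin φ)` is nonnegative for all directions then
`c^{-1/2}` is bounded on `ℝ²`; if it is strictly positive for all directions then
`c^{-1/2} → 0` at infinity. -/
theorem lump_c_inv_sqrt_bounded_and_decay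
    (l : ℕ) (α β κ : Fin (l + 1) → ℝ) (hκ : ∀ s, 0 < κ s) :
    (let c : ℝ → ℝ → ℝ := fun x y => ∑ s, κ s * Real.exp (α s * x + β s * y)
     let Itrop : ℝ → ℝ := fun φ => ⨆ s, (α s * Real.cos φ + β s * Real.sin φ)
     ((∀ φ, 0 ≤ Itrop φ) → ∃ M : ℝ, ∀ x y, (Real.sqrt (c x y))⁻¹ ≤ M) ∧
     ((∀ φ, 0 < Itrop φ) →
       Tendsto (fun p : ℝ × ℝ => (Real.sqrt (c p.1 p.2))⁻¹) (cocompact (ℝ × ℝ)) (nhds 0))) := by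
  intro c Itrop
  set m := ⨅ s, κ s
  have hm : 0 < m := iInf_pos_of_forall_pos hκ
  have hc : ∀ z : ℂ, m * exp (Itrop z.arg * ‖z‖) ≤ c z.re z.im := fun z => by
    have := iInf_mul_exp_iSup_le_sum_mul_exp (fun s => (hκ s).le) fun s => α s * z.re + β s * z.im
    rwa [iSup_linear_eq_iSup_arg_mul_norm] at this
  constructor
  · intro hI
    refine ⟨(√m)⁻¹, fun x y => ?_⟩
    gcongr
    calc m ≤ m * exp (Itrop (Complex.arg ⟨x, y⟩) * ‖(⟨x, y⟩ : ℂ)‖) :=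
          le_mul_of_one_le_right hm.le (one_le_exp (mul_nonneg (hI _) (norm_nonneg _)))
      _ ≤ c x y := hc ⟨x, y⟩
  · intro hI
    obtain ⟨ε, hε, hεI⟩ := exists_pos_le_comp_arg (lowerSemicontinuous_iSup_linear_cos_sin α β) hI
    have hlower : ∀ p : ℝ × ℝ, m * exp (ε * ‖Complex.equivRealProd.symm p‖) ≤ c p.1 p.2 :=
      fun p => le_trans (by gcongr; exact hεI _) (hc (Complex.equivRealProd.symm p))
    have hgrowth := (tendsto_const_mul_atTop_of_pos hm).2 <| tendsto_exp_atTop.comp <|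
      (tendsto_const_mul_atTop_of_pos hε).2 tendsto_norm_equivRealProd_symm_cocompact_atTop
    exact (tendsto_sqrt_atTop.comp (tendsto_atTop_mono hlower hgrowth)).inv_tendsto_atTop
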